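/- arXiv:1401.3511 — 9 statements merged into one kernel-verified Lean document; each statement's English description precedes it below -/
import Mathlib

section
/- Consider a discrete-time queue Q(t+1) = Q(t) − γ(t) + α(t) with Q(t) ≥ 0 for all t and Q(0) = 0. If Q is strongly stable (i.e., lim sup_{t→∞} (1/t) Σ_{τ=0}^{t−1} E[Q(τ)] < ∞) and arrivals α(t) are uniformly bounded, then the long-run average arrival rate is at most the long-run average service rate: lim sup_{t→∞} (1/t) Σ_{τ=0}^{t−1} E[α(τ) − γ(τ)] ≤ 0. -/
/-!
Taking expectations, the sum of the drifts `E[α τ - γ τ]` over `τ < t` telescopes to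
`a t = E[Q t]`, so the claim is that `a t / t → 0`. Since arrivals are bounded by `A`,
`a` grows by at most `A` per slot, so a large value `a t` forces the `K` preceding values to be
at least `a t - A K`; then `K (a t - A K) ≤ ∑_{s<t} a s ≤ M t` by strong stability, i.e.
`a t / t ≤ M / K + A K / t`, and letting first `t → ∞` and then `K → ∞` gives the claim.
-/

open MeasureTheory Filter Finset Topology

section IncrementBounded

variable {a : ℕ → ℝ} {A : ℝ}

lemma sub_mul_le_of_succ_le_add (hstep : ∀ n, a (n + 1) ≤ a n + A) {s t : ℕ} (hst : s ≤ t) :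
    a t - A * (t - s) ≤ a s := by
  have hanti : Antitone fun n : ℕ => a n - A * n :=
    antitone_nat_of_succ_le fun n => by push_cast; linarith [hstep n]
  linarith [hanti hst]

lemma mul_sub_le_sum_range_of_succ_le_add (ha : 0 ≤ a) (hA : 0 ≤ A)
    (hstep : ∀ n, a (n + 1) ≤ a n + A) {K t : ℕ} (hKt : K ≤ t) :
    K * (a t - A * K) ≤ ∑ s ∈ range t, a s := by
  have hwindow : ∀ s ∈ Ico (t - K) t, a t - A * K ≤ a s := fun s hs => by
    obtain ⟨hs₁, hs₂⟩ := mem_Ico.mp hs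
    have hts : (t : ℝ) - s ≤ K := by
      rw [sub_le_iff_le_add]; exact_mod_cast (show t ≤ K + s by omega)
    linarith [sub_mul_le_of_succ_le_add hstep hs₂.le, mul_le_mul_of_nonneg_left hts hA]
  calc (K : ℝ) * (a t - A * K) = ∑ _s ∈ Ico (t - K) t, (a t - A * K) := by
        rw [sum_const, Nat.card_Ico, Nat.sub_sub_self hKt, nsmul_eq_mul]
    _ ≤ ∑ s ∈ Ico (t - K) t, a s := sum_le_sum hwindow
    _ ≤ ∑ s ∈ range (t - K), a s + ∑ s ∈ Ico (t - K) t, a s :=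
        le_add_of_nonneg_left (sum_nonneg fun s _ => ha s)
    _ = ∑ s ∈ range t, a s := sum_range_add_sum_Ico a (Nat.sub_le t K)

lemma div_le_div_add_div_of_succ_le_add (ha : 0 ≤ a) (hA : 0 ≤ A)
    (hstep : ∀ n, a (n + 1) ≤ a n + A) {M : ℝ} {K t : ℕ} (hK : 0 < K) (hKt : K ≤ t)
    (hsum : ∑ s ∈ range t, a s ≤ M * t) :
    a t / t ≤ M / K + A * K / t := by
  have hK' : (0 : ℝ) < K := by exact_mod_cast hK
  have ht : (0 : ℝ) < t := by exact_mod_cast hK.trans_le hKt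
  have hwindow := mul_sub_le_sum_range_of_succ_le_add ha hA hstep hKt
  rw [div_add_div _ _ hK'.ne' ht.ne', div_le_div_iff₀ ht (mul_pos hK' ht)]
  nlinarith

theorem tendsto_div_atTop_zero_of_sum_range_le (ha : 0 ≤ a) (hA : 0 ≤ A)
    (hstep : ∀ n, a (n + 1) ≤ a n + A) {M : ℝ}
    (hsum : ∀ᶠ t in atTop, ∑ s ∈ range t, a s ≤ M * t) :
    Tendsto (fun t : ℕ => a t / t) atTop (𝓝 0) := by
  refine tendsto_order.2 ⟨fun b hb => Eventually.of_forall fun t => hb.trans_le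
    (div_nonneg (ha t) t.cast_nonneg), fun ε hε => ?_⟩
  obtain ⟨n, hn⟩ := exists_nat_gt (M / ε)
  have hK : M / (n + 1 : ℕ) < ε := by
    rw [div_lt_iff₀ (by positivity)]; push_cast
    rw [div_lt_iff₀ hε] at hn; linarith
  have hlim : Tendsto (fun t : ℕ => M / (n + 1 : ℕ) + A * (n + 1 : ℕ) / t) atTop
      (𝓝 (M / (n + 1 : ℕ))) := by
    simpa using tendsto_const_nhds.add (tendsto_const_div_atTop_nhds_zero_nat (A * (n + 1 : ℕ)))
  filter_upwards [hsum, eventually_ge_atTop (n + 1), hlim.eventually (gt_mem_nhds hK)]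
    with t hsum_t ht hlim_t
  exact (div_le_div_add_div_of_succ_le_add ha hA hstep n.succ_pos ht hsum_t).trans_lt hlim_t

end IncrementBounded

lemma exists_eventually_le_of_limsup_ofReal_lt_top {ι : Type*} {l : Filter ι} {f : ι → ℝ}
    (h : limsup (fun i => ENNReal.ofReal (f i)) l < ⊤) : ∃ M : ℝ, ∀ᶠ i in l, f i ≤ M := by
  obtain ⟨b, hb, hb_top⟩ := exists_between h
  exact ⟨b.toReal, (eventually_lt_of_limsup_lt hb).mono fun i hi =>
    (ENNReal.ofReal_le_iff_le_toReal hb_top.ne).mp hi.le⟩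

lemma sum_range_integral_sub_eq {Ω : Type*} [MeasurableSpace Ω] {P : Measure Ω}
    {α γ Q : ℕ → Ω → ℝ} (hαint : ∀ t, Integrable (α t) P) (hγint : ∀ t, Integrable (γ t) P)
    (hQint : ∀ t, Integrable (Q t) P) (hQrec : ∀ t ω, Q (t + 1) ω = Q t ω - γ t ω + α t ω)
    (t : ℕ) :
    ∑ τ ∈ range t, ∫ ω, (α τ ω - γ τ ω) ∂P = ∫ ω, Q t ω ∂P - ∫ ω, Q 0 ω ∂P := by
  rw [← sum_range_sub (fun τ => ∫ ω, Q τ ω ∂P)]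
  refine sum_congr rfl fun τ _ => ?_
  have hnext : ∫ ω, Q (τ + 1) ω ∂P = ∫ ω, Q τ ω ∂P + ∫ ω, (α τ ω - γ τ ω) ∂P := by
    have hdrift_int : Integrable (fun ω => α τ ω - γ τ ω) P := (hαint τ).sub (hγint τ)
    rw [← integral_add (hQint τ) hdrift_int]
    congr 1; funext ω; rw [hQrec]; ring
  linarith

theorem stmt2_general {Ω : Type*} [MeasurableSpace Ω] (P : Measure Ω) [IsProbabilityMeasure P]
    (α γ Q : ℕ → Ω → ℝ)
    (hγ0 : ∀ t ω, 0 ≤ γ t ω)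
    (hαint : ∀ t, Integrable (α t) P) (hγint : ∀ t, Integrable (γ t) P)
    (hQint : ∀ t, Integrable (Q t) P)
    (hQpos : ∀ t ω, 0 ≤ Q t ω)
    (hQ0 : ∀ ω, Q 0 ω = 0)
    (hQrec : ∀ t ω, Q (t + 1) ω = Q t ω - γ t ω + α t ω)
    (Amax : ℝ) (hαb : ∀ t ω, α t ω ≤ Amax)
    (hstable : Filter.limsup
      (fun t : ℕ => ENNReal.ofReal ((1 / (t : ℝ)) * ∑ τ ∈ Finset.range t, ∫ ω, Q τ ω ∂P))
      atTop < ⊤) :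
    Filter.limsup
      (fun t : ℕ => (1 / (t : ℝ)) * ∑ τ ∈ Finset.range t, ∫ ω, (α τ ω - γ τ ω) ∂P)
      atTop ≤ 0 := by
  set a : ℕ → ℝ := fun t => ∫ ω, Q t ω ∂P
  have hdrift : ∀ t, ∑ τ ∈ range t, ∫ ω, (α τ ω - γ τ ω) ∂P = a t := fun t => by
    simp [a, sum_range_integral_sub_eq hαint hγint hQint hQrec t, hQ0]
  have ha : 0 ≤ a := fun t => integral_nonneg (hQpos t)
  have hstep : ∀ t, a (t + 1) ≤ a t + max Amax 0 := fun t => by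
    have hdrift_le : ∫ ω, (α t ω - γ t ω) ∂P ≤ max Amax 0 := by
      refine (integral_mono ((hαint t).sub (hγint t)) (integrable_const Amax)
        fun ω => by simp only [Pi.sub_apply]; linarith [hαb t ω, hγ0 t ω]).trans ?_
      simp
    linarith [hdrift (t + 1), hdrift t, sum_range_succ (fun τ => ∫ ω, (α τ ω - γ τ ω) ∂P) t]
  obtain ⟨M, hM⟩ := exists_eventually_le_of_limsup_ofReal_lt_top hstable
  have hsum : ∀ᶠ t in atTop, ∑ s ∈ range t, a s ≤ M * t := by
    filter_upwards [hM, eventually_gt_atTop 0] with t ht htpos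
    rwa [one_div_mul_eq_div, div_le_iff₀ (by exact_mod_cast htpos)] at ht
  simp only [hdrift, one_div_mul_eq_div]
  exact (tendsto_div_atTop_zero_of_sum_range_le ha (le_max_right Amax 0) hstep hsum).limsup_eq.le

/-- Necessity direction of queue stability: for a nonnegative queue with linear dynamics
`Q(t+1) = Q(t) - γ(t) + α(t)`, strong stability and uniformly bounded arrivals imply
that the average arrival rate is at most the average service rate. -/
theorem stmt2 {Ω : Type*} [MeasurableSpace Ω] (P : Measure Ω) [IsProbabilityMeasure P]
    (α γ Q : ℕ → Ω → ℝ)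
    (hα0 : ∀ t ω, 0 ≤ α t ω) (hγ0 : ∀ t ω, 0 ≤ γ t ω)
    (hαint : ∀ t, Integrable (α t) P) (hγint : ∀ t, Integrable (γ t) P)
    (hQint : ∀ t, Integrable (Q t) P)
    (hQpos : ∀ t ω, 0 ≤ Q t ω)
    (hQ0 : ∀ ω, Q 0 ω = 0)
    (hQrec : ∀ t ω, Q (t + 1) ω = Q t ω - γ t ω + α t ω)
    (Amax : ℝ) (hαb : ∀ t ω, α t ω ≤ Amax)
    (hstable : Filter.limsup
      (fun t : ℕ => ENNReal.ofReal ((1 / (t : ℝ)) * ∑ τ ∈ Finset.range t, ∫ ω, Q τ ω ∂P))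
      atTop < ⊤) :
    Filter.limsup
      (fun t : ℕ => (1 / (t : ℝ)) * ∑ τ ∈ Finset.range t, ∫ ω, (α τ ω - γ τ ω) ∂P)
      atTop ≤ 0 :=
  stmt2_general P α γ Q hγ0 hαint hγint hQint hQpos hQ0 hQrec Amax hαb hstable
end

section
/- Consider two coupled queues with dynamics Q(t+1) = max(Q(t) − μ(t) − d(t)·s, 0) + r(t)·s and Y(t+1) = max(Y(t) − r(t)·s, 0) + η(t)·s, with Q(0) = Y(0) = 0, where r(t) ∈ [0, A_max] is chosen by the rule r(t) = A(t) if Y(t) − Q(t) > 0 and r(t) = 0 otherwise (with A(t) ∈ [0, A_max]), and μ(t), d(t) ≥ 0. If Y(t) ≤ Y_max for all t, then Q(t) ≤ Y_max + A_max·s for all t ≥ 0. -/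
/-- Bound on the packet queue: under the admission rule `r(t) = A(t)` iff
`Y(t) - Q(t) > 0`, and a uniform bound `Y(t) ≤ Y_max` on the virtual queue,
the packet queue satisfies `Q(t) ≤ Y_max + A_max·s` for all `t`. -/
theorem stmt4 (s Amax Ymax : ℝ) (hs : 0 < s) (hA : 0 ≤ Amax)
    (Q Y r η μ d A : ℕ → ℝ)
    (hQ0 : Q 0 = 0) (hY0 : Y 0 = 0)
    (hAval : ∀ t, A t ∈ Set.Icc (0 : ℝ) Amax)
    (hrval : ∀ t, r t ∈ Set.Icc (0 : ℝ) Amax)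
    (hrrule : ∀ t, r t = if 0 < Y t - Q t then A t else 0)
    (hμ : ∀ t, 0 ≤ μ t) (hd : ∀ t, 0 ≤ d t)
    (hQrec : ∀ t, Q (t + 1) = max (Q t - μ t - d t * s) 0 + r t * s)
    (hYrec : ∀ t, Y (t + 1) = max (Y t - r t * s) 0 + η t * s)
    (hYb : ∀ t, Y t ≤ Ymax) :
    ∀ t, Q t ≤ Ymax + Amax * s := by
  have hYm : 0 ≤ Ymax := hY0 ▸ hYb 0
  have hAs : 0 ≤ Amax * s := mul_nonneg hA hs.le
  intro t
  induction t with
  | zero => rw [hQ0]; positivity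
  | succ n ih =>
    rw [hQrec n, hrrule n]
    have hds : 0 ≤ d n * s := mul_nonneg (hd n) hs.le
    by_cases h : 0 < Y n - Q n
    · simp only [if_pos h]
      have hQn : Q n ≤ Ymax := le_of_lt (by linarith [hYb n])
      have h1 : max (Q n - μ n - d n * s) 0 ≤ Ymax := by
        apply max_le _ hYm; linarith [hμ n]
      have h2 : A n * s ≤ Amax * s :=
        mul_le_mul_of_nonneg_right (hAval n).2 hs.le
      linarith
    · simp only [if_neg h, zero_mul, add_zero]
      apply max_le _ (by linarith)
      linarith [hμ n]
end

section
/- Consider a queue with dynamics Z(t+1) = max(Z(t) + 1_{Q(t)>0}·(ε − μ(t)) − d(t)·s − 1_{Q(t)=0}, 0), Z(0) = 0, where ε > 0, s > 0, μ(t) ∈ [0,1], Q(t) ≥ 0, and the drop decision is d(t) = d_max if Q(t) + Z(t) > Vβ/s and d(t) = 0 otherwise, for constants V, β > 0 with d_max ≥ ε/s. Then Z(t) ≤ Vβ/s + ε for all t ≥ 0. -/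
/-- Bound on the ε-persistence delay virtual queue: under the drop rule
`d(t) = d_max` iff `Q(t) + Z(t) > Vβ/s`, with `d_max ≥ ε/s`, the virtual queue
satisfies `Z(t) ≤ Vβ/s + ε` for all `t`. -/
theorem stmt5 (ε s V β dmax : ℝ) (hε : 0 < ε) (hs : 0 < s) (hV : 0 < V) (hβ : 0 < β)
    (hdmax : ε / s ≤ dmax)
    (Z Q μ d : ℕ → ℝ)
    (hZ0 : Z 0 = 0)
    (hμ : ∀ t, μ t ∈ Set.Icc (0 : ℝ) 1)
    (hQpos : ∀ t, 0 ≤ Q t)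
    (hdrule : ∀ t, d t = if V * β / s < Q t + Z t then dmax else 0)
    (hZrec : ∀ t, Z (t + 1) =
      max (Z t + (if 0 < Q t then ε - μ t else 0) - d t * s - (if Q t = 0 then 1 else 0)) 0) :
    ∀ t, Z t ≤ V * β / s + ε := by
  intro t
  induction t with
  | zero => rw [hZ0]; positivity
  | succ n ih =>
    rw [hZrec n]
    have hVβ : 0 < V * β / s := by positivity
    obtain ⟨h0, h1⟩ := hμ n
    have hdmax' : ε ≤ dmax * s := by
      have := mul_le_mul_of_nonneg_right hdmax hs.le
      rwa [div_mul_cancel₀ _ hs.ne'] at this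
    apply max_le _ (by positivity)
    rcases le_or_gt (Z n) (V * β / s) with h | h
    · have hd : 0 ≤ d n := by
        rw [hdrule n]; split
        · nlinarith
        · exact le_rfl
      split_ifs with hq hq0 <;> nlinarith
    · have hd : d n = dmax := by
        rw [hdrule n, if_pos]
        have := hQpos n; linarith
      split_ifs with hq hq0 <;> nlinarith
end

section
/- Let Q(t), Z(t) ≥ 0 be sequences with Z(t+1) ≥ Z(t) + ε − μ(t) − d(t)·s whenever Q(τ) > 0 for all τ in the relevant interval, and suppose Z(t) ≤ Z_max and Q(t) ≤ Q_max for all t. Fix t and suppose Q(τ) > 0 for all τ ∈ [t+1, t+D] and Σ_{τ=t+1}^{t+D} [μ(τ) + d(τ)·s] < Q_max. Then ε·D < Q_max + Z_max. -/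
/-! The recursion for `Z` telescopes: over the window, `Z` gains at least `ε D` minus the total
service and drops, which is below `Q_max`, while `0 ≤ Z ≤ Z_max` caps the gain at `Z_max`. -/

open Finset

theorem nsmul_le_sub_add_sum_Ico_of_add_le_succ {α : Type*} [AddCommGroup α] [PartialOrder α]
    [IsOrderedAddMonoid α] {Z c : ℕ → α} {ε : α} {a b : ℕ} (hab : a ≤ b)
    (h : ∀ τ ∈ Ico a b, Z τ + ε ≤ Z (τ + 1) + c τ) :
    (b - a) • ε ≤ Z b - Z a + ∑ τ ∈ Ico a b, c τ :=
  calc (b - a) • ε = ∑ τ ∈ Ico a b, ε := by rw [sum_const, Nat.card_Ico]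
    _ ≤ ∑ τ ∈ Ico a b, (Z (τ + 1) - Z τ + c τ) :=
        sum_le_sum fun τ hτ => by rw [sub_add_eq_add_sub, le_sub_iff_add_le']; exact h τ hτ
    _ = Z b - Z a + ∑ τ ∈ Ico a b, c τ := by rw [sum_add_distrib, sum_Ico_sub _ hab]

theorem stmt6_general (ε s Qmax Zmax : ℝ)
    (Q Z μ d : ℕ → ℝ) (t D : ℕ)
    (hZnonneg : ∀ τ, 0 ≤ Z τ) (hZb : ∀ τ, Z τ ≤ Zmax)
    (hZrec : ∀ τ, 0 < Q τ → Z τ + ε - μ τ - d τ * s ≤ Z (τ + 1))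
    (hQpos : ∀ τ ∈ Finset.Icc (t + 1) (t + D), 0 < Q τ)
    (hsum : ∑ τ ∈ Finset.Icc (t + 1) (t + D), (μ τ + d τ * s) < Qmax) :
    ε * D < Qmax + Zmax := by
  have hwindow : Ico (t + 1) (t + D + 1) = Icc (t + 1) (t + D) := Ico_add_one_right_eq_Icc _ _
  have hgrowth := nsmul_le_sub_add_sum_Ico_of_add_le_succ (Z := Z) (ε := ε)
    (c := fun τ => μ τ + d τ * s) (by omega : t + 1 ≤ t + D + 1) fun τ hτ => by
      have := hZrec τ (hQpos τ (hwindow ▸ hτ))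
      linarith
  rw [hwindow, show t + D + 1 - (t + 1) = D by omega, nsmul_eq_mul] at hgrowth
  linarith [hZnonneg (t + 1), hZb (t + D + 1)]

/-- Core contradiction inequality of the worst-case-delay argument: if `Q(τ) > 0`
on `[t+1, t+D]` and the total service plus drops over that window is less than
`Q_max`, then `ε·D < Q_max + Z_max`. -/
theorem stmt6 (ε s Qmax Zmax : ℝ) (hε : 0 < ε) (hs : 0 < s)
    (Q Z μ d : ℕ → ℝ) (t D : ℕ)
    (hμ : ∀ τ, 0 ≤ μ τ) (hd : ∀ τ, 0 ≤ d τ)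
    (hZnonneg : ∀ τ, 0 ≤ Z τ) (hZb : ∀ τ, Z τ ≤ Zmax) (hQb : ∀ τ, Q τ ≤ Qmax)
    (hZrec : ∀ τ, 0 < Q τ → Z τ + ε - μ τ - d τ * s ≤ Z (τ + 1))
    (hQpos : ∀ τ ∈ Finset.Icc (t + 1) (t + D), 0 < Q τ)
    (hsum : ∑ τ ∈ Finset.Icc (t + 1) (t + D), (μ τ + d τ * s) < Qmax) :
    ε * D < Qmax + Zmax :=
  stmt6_general ε s Qmax Zmax Q Z μ d t D hZnonneg hZb hZrec hQpos hsum
end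

section
/- Under the assumptions of the ε-persistence-queue delay argument, if ε = (Q_max + Z_max)/D where Q_max, Z_max bound the packet and virtual queues (Q(t) ≤ Q_max, 0 ≤ Z(t) ≤ Z_max for all t), the virtual queue satisfies Z(τ+1) ≥ Z(τ) + ε − μ(τ) − d(τ)·s whenever Q(τ) > 0, and jobs depart in FIFO order, then every job admitted at slot t departs (is served or dropped) by slot t + D. Formally: it cannot be that Q(τ) > 0 for all τ ∈ [t+1, t+D] and Σ_{τ=t+1}^{t+D}[μ(τ) + d(τ)·s] < Q(t+1). -/
/-!
While the packet queue stays backlogged, every slot adds at least `ε - μ(τ) - d(τ) s` to the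
persistence queue `Z`. Over `D` backlogged slots this telescopes to
`Z(t+1) + D ε - ∑ (μ + d s) ≤ Z(t+D+1) ≤ Z_max`, and since `D ε = Q_max + Z_max` and
`Z(t+1) ≥ 0`, the service and drops over the window total at least `Q_max ≥ Q(t+1)`.
-/

open Finset

theorem nsmul_sub_sum_le_sub_of_le_succ {G : Type*} [AddCommGroup G] [PartialOrder G]
    [IsOrderedAddMonoid G] {f c : ℕ → G} {a : G} {n : ℕ}
    (h : ∀ j < n, f j + a - c j ≤ f (j + 1)) :
    n • a - ∑ j ∈ range n, c j ≤ f n - f 0 := by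
  calc n • a - ∑ j ∈ range n, c j = ∑ j ∈ range n, (a - c j) := by
        rw [sum_sub_distrib, sum_const, card_range]
    _ ≤ ∑ j ∈ range n, (f (j + 1) - f j) := by
        refine sum_le_sum fun j hj => ?_
        rw [le_sub_iff_add_le', ← add_sub_assoc]
        exact h j (mem_range.mp hj)
    _ = f n - f 0 := sum_range_sub f n

theorem sum_Icc_add_one_eq_sum_range {M : Type*} [AddCommMonoid M] (f : ℕ → M) (m n : ℕ) :
    ∑ τ ∈ Icc (m + 1) (m + n), f τ = ∑ j ∈ range n, f (m + 1 + j) := by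
  rw [← Ico_add_one_right_eq_Icc, sum_Ico_eq_sum_range, show m + n + 1 - (m + 1) = n by omega]

theorem stmt7_general (ε s Qmax Zmax : ℝ)
    (Q Z μ d : ℕ → ℝ) (t D : ℕ) (hD : 0 < D)
    (hεdef : ε = (Qmax + Zmax) / D)
    (hZnonneg : ∀ τ, 0 ≤ Z τ) (hZb : ∀ τ, Z τ ≤ Zmax) (hQb : ∀ τ, Q τ ≤ Qmax)
    (hZrec : ∀ τ, 0 < Q τ → Z τ + ε - μ τ - d τ * s ≤ Z (τ + 1)) :
    ¬ ((∀ τ ∈ Finset.Icc (t + 1) (t + D), 0 < Q τ) ∧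
       ∑ τ ∈ Finset.Icc (t + 1) (t + D), (μ τ + d τ * s) < Q (t + 1)) := by
  rintro ⟨hpos, hsum⟩
  rw [sum_Icc_add_one_eq_sum_range] at hsum
  have hdrift : D • ε - ∑ j ∈ range D, (μ (t + 1 + j) + d (t + 1 + j) * s)
      ≤ Z (t + 1 + D) - Z (t + 1 + 0) := by
    refine nsmul_sub_sum_le_sub_of_le_succ (f := fun j => Z (t + 1 + j)) fun j hj => ?_
    have hstep := hZrec (t + 1 + j) (hpos _ (mem_Icc.mpr ⟨by omega, by omega⟩))
    show _ ≤ Z (t + 1 + j + 1)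
    linarith
  have hDε : D • ε = Qmax + Zmax := by
    rw [nsmul_eq_mul, hεdef]
    field_simp
  linarith [hZb (t + 1 + D), hZnonneg (t + 1 + 0), hQb (t + 1)]

/-- Worst-case delay guarantee: with `ε = (Q_max + Z_max)/D`, it cannot happen that
the queue stays positive over `[t+1, t+D]` while the total service plus drops over
that window is less than `Q(t+1)`; hence every job admitted at slot `t` departs by
slot `t + D`. -/
theorem stmt7 (ε s Qmax Zmax : ℝ) (hs : 0 < s)
    (Q Z μ d : ℕ → ℝ) (t D : ℕ) (hD : 0 < D)
    (hεdef : ε = (Qmax + Zmax) / D)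
    (hμ : ∀ τ, 0 ≤ μ τ) (hd : ∀ τ, 0 ≤ d τ)
    (hZnonneg : ∀ τ, 0 ≤ Z τ) (hZb : ∀ τ, Z τ ≤ Zmax) (hQb : ∀ τ, Q τ ≤ Qmax)
    (hZrec : ∀ τ, 0 < Q τ → Z τ + ε - μ τ - d τ * s ≤ Z (τ + 1)) :
    ¬ ((∀ τ ∈ Finset.Icc (t + 1) (t + D), 0 < Q τ) ∧
       ∑ τ ∈ Finset.Icc (t + 1) (t + D), (μ τ + d τ * s) < Q (t + 1)) :=
  stmt7_general ε s Qmax Zmax Q Z μ d t D hD hεdef hZnonneg hZb hQb hZrec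
end

section
/- With the notation of the Gibbs distribution over independent sets (π(χ) ∝ e^{Σ_{i∈χ} w_i}, Φ* = max_{χ∈Λ} Σ_{i∈χ} w_i), for any δ, θ ∈ (0,1): if Φ* > (1/θ)·(|E|·log 2 + log(1/δ)), then π({χ : Σ_{i∈χ} w_i < (1−θ)Φ*}) < δ. -/
/-! Each schedule of weight below `(1 - θ)Φ*` contributes at most `e^((1-θ)Φ*)` to the
partition function, there are at most `2^|E|` schedules, and the partition function is at
least `e^Φ*`, the term of a maximum-weight schedule. Hence the probability is at most
`2^|E| e^(-θΦ*)`, which the hypothesis on `Φ*` makes smaller than `δ`. -/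

open Real Finset

theorem gibbs_tail_le {α : Type*} (s : Finset α) (f : α → ℝ) {M : ℝ} (hM : M ∈ f '' s)
    (c : ℝ) :
    (∑ x ∈ s.filter (fun x => f x < c), exp (f x)) / ∑ x ∈ s, exp (f x) ≤
      s.card * exp (c - M) := by
  obtain ⟨x₀, hx₀, rfl⟩ := hM
  have hden : exp (f x₀) ≤ ∑ x ∈ s, exp (f x) :=
    single_le_sum (f := fun x => exp (f x)) (fun _ _ => (exp_pos _).le) hx₀
  have hnum : ∑ x ∈ s.filter (fun x => f x < c), exp (f x) ≤ s.card * exp c :=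
    calc ∑ x ∈ s.filter (fun x => f x < c), exp (f x)
        ≤ (s.filter (fun x => f x < c)).card * exp c := by
          simpa using sum_le_card_nsmul _ _ _ fun x hx => exp_le_exp.mpr (mem_filter.mp hx).2.le
      _ ≤ s.card * exp c := by gcongr; exact filter_subset _ _
  rw [exp_sub, mul_div_assoc']
  exact div_le_div₀ (by positivity) hnum (exp_pos _) hden

theorem two_pow_mul_exp_neg_lt {n : ℕ} {δ t : ℝ} (hδ : 0 < δ)
    (ht : n * log 2 + log (1 / δ) < t) : (2 : ℝ) ^ n * exp (-t) < δ := by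
  have h2 : (2 : ℝ) ^ n = exp (n * log 2) := by rw [exp_nat_mul, exp_log two_pos]
  rw [one_div, log_inv] at ht
  rw [h2, ← exp_add, ← exp_log hδ]
  exact exp_lt_exp.mpr (by linarith)

theorem stmt13_general {E : Type*} [Fintype E]
    (Λ : Finset (Finset E))
    (w : E → ℝ)
    (θ δ : ℝ) (hθ : θ ∈ Set.Ioo (0 : ℝ) 1) (hδ : δ ∈ Set.Ioo (0 : ℝ) 1)
    (Φs : ℝ)
    (hΦs : IsGreatest ((fun χ : Finset E => ∑ i ∈ χ, w i) '' (Λ : Set (Finset E))) Φs)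
    (hlarge : (1 / θ) * ((Fintype.card E : ℝ) * Real.log 2 + Real.log (1 / δ)) < Φs) :
    (∑ χ ∈ Λ.filter (fun χ => ∑ i ∈ χ, w i < (1 - θ) * Φs), Real.exp (∑ i ∈ χ, w i)) /
        (∑ χ ∈ Λ, Real.exp (∑ i ∈ χ, w i)) < δ := by
  have hcard : (Λ.card : ℝ) ≤ 2 ^ Fintype.card E := by
    exact_mod_cast (card_le_univ Λ).trans_eq Fintype.card_finset
  rw [one_div_mul_eq_div, div_lt_iff₀ hθ.1, mul_comm Φs] at hlarge
  calc _ ≤ Λ.card * exp ((1 - θ) * Φs - Φs) := gibbs_tail_le Λ _ hΦs.1 _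
    _ ≤ 2 ^ Fintype.card E * exp (-(θ * Φs)) := by
      rw [show (1 - θ) * Φs - Φs = -(θ * Φs) by ring]
      gcongr
    _ < δ := two_pow_mul_exp_neg_lt hδ.1 hlarge

/-- Quantitative form of the `1-δ` weight theorem: if the maximum weight exceeds
`(1/θ)(|E| log 2 + log(1/δ))`, then the Gibbs measure of low-weight schedules is
below `δ`. -/
theorem stmt13 {E : Type*} [Fintype E] [DecidableEq E]
    (Λ : Finset (Finset E)) (hne : Λ.Nonempty)
    (w : E → ℝ) (hw : ∀ i, 0 ≤ w i)
    (θ δ : ℝ) (hθ : θ ∈ Set.Ioo (0 : ℝ) 1) (hδ : δ ∈ Set.Ioo (0 : ℝ) 1)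
    (Φs : ℝ)
    (hΦs : IsGreatest ((fun χ : Finset E => ∑ i ∈ χ, w i) '' (Λ : Set (Finset E))) Φs)
    (hlarge : (1 / θ) * ((Fintype.card E : ℝ) * Real.log 2 + Real.log (1 / δ)) < Φs) :
    (∑ χ ∈ Λ.filter (fun χ => ∑ i ∈ χ, w i < (1 - θ) * Φs), Real.exp (∑ i ∈ χ, w i)) /
        (∑ χ ∈ Λ, Real.exp (∑ i ∈ χ, w i)) < δ :=
  stmt13_general Λ w θ δ hθ hδ Φs hΦs hlarge
end

section
/- Let G be a graph with vertex set E, Λ its family of independent sets, and let χ, χ' ∈ Λ. In the CSMA update, a transition from χ to χ' in one step is possible (has positive probability) only if χ ∪ χ' ∈ Λ, i.e., the union of two consecutive collision-free schedules must itself be an independent set. -/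
/-- Necessity half of the CSMA transition lemma: if a one-step CSMA transition from the
collision-free schedule `χ` to the collision-free schedule `χ'` is possible (via a
collision-free control schedule `z`, where links outside `z` keep their state and a
link in `z` may be active afterwards only if none of its neighbors was active before),
then `χ ∪ χ'` is itself collision free. -/
theorem stmt14 {E : Type*} (G : SimpleGraph E) (χ χ' z : Set E)
    (hχ : ∀ i ∈ χ, ∀ j ∈ χ, ¬ G.Adj i j)
    (hχ' : ∀ i ∈ χ', ∀ j ∈ χ', ¬ G.Adj i j)
    (hz : ∀ i ∈ z, ∀ j ∈ z, ¬ G.Adj i j)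
    (hkeep : ∀ i ∉ z, (i ∈ χ' ↔ i ∈ χ))
    (hon : ∀ i ∈ z, i ∈ χ' → ∀ j, G.Adj i j → j ∉ χ) :
    ∀ i ∈ χ ∪ χ', ∀ j ∈ χ ∪ χ', ¬ G.Adj i j := by
  have key : ∀ i ∈ χ, ∀ j ∈ χ', ¬ G.Adj i j := by
    intro i hi j hj hadj
    by_cases hjχ : j ∈ χ
    · exact hχ i hi j hjχ hadj
    · have hjz : j ∈ z := by
        by_contra h
        exact hjχ ((hkeep j h).mp hj)
      exact hon j hjz hj i hadj.symm hi
  intro i hi j hj hadj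
  rcases hi with hi | hi <;> rcases hj with hj | hj
  · exact hχ i hi j hj hadj
  · exact key i hi j hj hadj
  · exact key j hj i hi hadj.symm
  · exact hχ' i hi j hj hadj
end

section
/- For the CSMA Markov chain on independent sets Λ with activation probabilities p_i ∈ (0,1), transition probabilities P(χ, χ') given by Eqn. (32) (a sum over control schedules z containing the symmetric difference χ △ χ', of ρ(z)·Π_{i∈χ/χ'}(1−p_i)·Π_{i∈χ'/χ} p_i·Π_{i∈z∩(χ∩χ')} p_i·Π_{i∈z/(χ∪χ')/C(χ∪χ')}(1−p_i)), and π(χ) = (1/H)·Π_{i∈χ} p_i/(1−p_i): the detailed balance equation π(χ)·P(χ, χ') = π(χ')·P(χ', χ) holds for all χ, χ' ∈ Λ, so the chain is reversible with stationary distribution π. -/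
/-!
Fix a control schedule `z`. The factors `ρ z`, `∏_{z ∩ (χ ∩ χ')} p` and `∏_{z \ (χ ∪ χ') \ C(χ ∪ χ')} (1 - p)`
and the condition `χ △ χ' ⊆ z` are symmetric in `χ, χ'`. For the rest, multiplying the odds
`∏_{χ} p/(1-p)` by the departure factor `∏_{χ \ χ'} (1 - p)` cancels the denominators on `χ \ χ'`,
so `π(χ) ∏_{χ \ χ'} (1 - p) ∏_{χ' \ χ} p` is `H⁻¹ ∏_{χ ∩ χ'} p/(1-p) ∏_{χ △ χ'} p`, which is
symmetric as well. Hence the two sums defining `π(χ) P(χ, χ')` and `π(χ') P(χ', χ)` agree term by term.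
-/

open Finset

section Odds

variable {E : Type*} [DecidableEq E] (p : E → ℝ)

theorem prod_odds_mul_prod_sdiff_one_sub (hp : ∀ i, 1 - p i ≠ 0) (s t : Finset E) :
    (∏ i ∈ s, p i / (1 - p i)) * ∏ i ∈ s \ t, (1 - p i) =
      (∏ i ∈ s ∩ t, p i / (1 - p i)) * ∏ i ∈ s \ t, p i := by
  rw [← prod_inter_mul_prod_sdiff s t (fun i => p i / (1 - p i)), mul_assoc, ← prod_mul_distrib]
  exact congrArg _ (prod_congr rfl fun i _ => div_mul_cancel₀ _ (hp i))

theorem prod_odds_detailed_balance (hp : ∀ i, 1 - p i ≠ 0) (s t : Finset E) :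
    (∏ i ∈ s, p i / (1 - p i)) * (∏ i ∈ s \ t, (1 - p i)) * ∏ i ∈ t \ s, p i =
      (∏ i ∈ t, p i / (1 - p i)) * (∏ i ∈ t \ s, (1 - p i)) * ∏ i ∈ s \ t, p i := by
  rw [prod_odds_mul_prod_sdiff_one_sub p hp, prod_odds_mul_prod_sdiff_one_sub p hp, inter_comm]
  ring

end Odds

theorem stmt15_general {E : Type*} [DecidableEq E]
    (C : E → Finset E) (Zs : Finset (Finset E))
    (ρ : Finset E → ℝ)
    (p : E → ℝ) (hp : ∀ i, p i ∈ Set.Ioo (0 : ℝ) 1)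
    (H : ℝ)
    (P : Finset E → Finset E → ℝ)
    (hP : ∀ χ χ' : Finset E, P χ χ' =
      ∑ z ∈ Zs.filter (fun z => symmDiff χ χ' ⊆ z),
        ρ z * (∏ i ∈ χ \ χ', (1 - p i)) * (∏ i ∈ χ' \ χ, p i) *
          (∏ i ∈ z ∩ (χ ∩ χ'), p i) *
          (∏ i ∈ (z \ (χ ∪ χ')) \ ((χ ∪ χ').biUnion C), (1 - p i)))
    (χ χ' : Finset E) :
    ((∏ i ∈ χ, p i / (1 - p i)) / H) * P χ χ' =
      ((∏ i ∈ χ', p i / (1 - p i)) / H) * P χ' χ := by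
  have hp' : ∀ i, 1 - p i ≠ 0 := fun i => sub_ne_zero.2 (hp i).2.ne'
  rw [hP, hP, mul_sum, mul_sum, symmDiff_comm χ' χ, inter_comm χ' χ, union_comm χ' χ]
  refine sum_congr rfl fun z _ => ?_
  linear_combination (ρ z * (∏ i ∈ z ∩ (χ ∩ χ'), p i) *
      (∏ i ∈ (z \ (χ ∪ χ')) \ ((χ ∪ χ').biUnion C), (1 - p i)) / H) *
    prod_odds_detailed_balance p hp' χ χ'

/-- Detailed balance for the CSMA Markov chain: with the product-form distribution
`π(χ) ∝ ∏_{i∈χ} p_i/(1-p_i)` and the transition probabilities of Eqn. (32),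
`π(χ)P(χ,χ') = π(χ')P(χ',χ)` for all collision-free schedules `χ, χ'`. -/
theorem stmt15 {E : Type*} [Fintype E] [DecidableEq E]
    (C : E → Finset E) (Λ Zs : Finset (Finset E)) (hZΛ : Zs ⊆ Λ)
    (ρ : Finset E → ℝ) (hρpos : ∀ z ∈ Zs, 0 < ρ z) (hρsum : ∑ z ∈ Zs, ρ z = 1)
    (p : E → ℝ) (hp : ∀ i, p i ∈ Set.Ioo (0 : ℝ) 1)
    (H : ℝ) (hH : H = ∑ χ ∈ Λ, ∏ i ∈ χ, p i / (1 - p i))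
    (P : Finset E → Finset E → ℝ)
    (hP : ∀ χ χ' : Finset E, P χ χ' =
      ∑ z ∈ Zs.filter (fun z => symmDiff χ χ' ⊆ z),
        ρ z * (∏ i ∈ χ \ χ', (1 - p i)) * (∏ i ∈ χ' \ χ, p i) *
          (∏ i ∈ z ∩ (χ ∩ χ'), p i) *
          (∏ i ∈ (z \ (χ ∪ χ')) \ ((χ ∪ χ').biUnion C), (1 - p i)))
    (χ χ' : Finset E) (hχ : χ ∈ Λ) (hχ' : χ' ∈ Λ) :
    ((∏ i ∈ χ, p i / (1 - p i)) / H) * P χ χ' =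
      ((∏ i ∈ χ', p i / (1 - p i)) / H) * P χ' χ :=
  stmt15_general C Zs ρ p hp H P hP χ χ'
end

section
/- If the previous schedule χ(t−1) is collision free (an independent set of the conflict graph) and the control schedule z(t) is collision free, then the new schedule χ(t) produced by the CSMA update rule is also collision free. The update rule: x_i(t) = x_i(t−1) if i ∉ z(t); if i ∈ z(t), then x_i(t) = 0 whenever some j ∈ C_i had x_j(t−1) = 1, and otherwise x_i(t) ∈ {0,1} arbitrarily. -/
/-- Correctness of the CSMA schedule update (Lemma 2): if the previous schedule and the
control schedule are collision free, then the new schedule produced by the update rule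
(links outside `z` keep their state; a link in `z` is forced inactive if some neighbor
was previously active) is also collision free. -/
theorem stmt16 {E : Type*} (G : SimpleGraph E) (χprev z χnew : Set E)
    (hprev : ∀ i ∈ χprev, ∀ j ∈ χprev, ¬ G.Adj i j)
    (hz : ∀ i ∈ z, ∀ j ∈ z, ¬ G.Adj i j)
    (hkeep : ∀ i ∉ z, (i ∈ χnew ↔ i ∈ χprev))
    (hblock : ∀ i ∈ z, (∃ j, G.Adj i j ∧ j ∈ χprev) → i ∉ χnew) :
    ∀ i ∈ χnew, ∀ j ∈ χnew, ¬ G.Adj i j := by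
  intro i hi j hj hadj
  by_cases hiz : i ∈ z <;> by_cases hjz : j ∈ z
  · exact hz i hiz j hjz hadj
  · exact hblock i hiz ⟨j, hadj, (hkeep j hjz).mp hj⟩ hi
  · exact hblock j hjz ⟨i, hadj.symm, (hkeep i hiz).mp hi⟩ hj
  · exact hprev i ((hkeep i hiz).mp hi) j ((hkeep j hjz).mp hj) hadj
end
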